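/- arXiv:1502.00025 — 2 statements merged into one kernel-verified Lean document; each statement's English description precedes it below -/
import Mathlib

section
/- Let p be a prime and n ≥ 1. The number of n-tuples ((r₁,a₁),...,(rₙ,aₙ)) with rᵢ ∈ ℕ, aᵢ ∈ ℤ/pℤ, aᵢ = 0 whenever rᵢ = 0, satisfying n = r₁ + 2r₂ + ⋯ + n·rₙ and a₁ + 2a₂ + ⋯ + n·aₙ = 0 in ℤ/pℤ, equals Σ_{k=1}^{n} [ν(n,k,p)·pᵏ + ν'(n,k,p)·p^{k-1}]. -/
/-!
Over a rank solution `r` with `k` nonzero entries, the `aᵢ` on the support of `r` are free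
subject to the single linear equation `∑ i • aᵢ = 0` over `𝔽_p`. It is vacuous when `p` divides
every index in the support and otherwise cuts out a hyperplane, so the fibre has `p ^ k` or
`p ^ (k - 1)` points; summing over `r` grouped by `k` gives the formula.
-/

/-- Solutions of the rank equation with exactly `k` nonzero entries, all of whose
nonzero-coordinate indices (the values `i`, `1 ≤ i ≤ n`) are divisible by `p`. -/
noncomputable def nuSolP (n k p : ℕ) : ℕ :=
  Nat.card {r : Fin n → ℕ //
    n = ∑ i : Fin n, (i.1 + 1) * r i ∧
      (Finset.univ.filter fun i : Fin n => r i ≠ 0).card = k ∧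
        ∀ i : Fin n, r i ≠ 0 → p ∣ (i.1 + 1)}

/-- Solutions with exactly `k` nonzero entries, not all indices divisible by `p`. -/
noncomputable def nuSolP' (n k p : ℕ) : ℕ :=
  Nat.card {r : Fin n → ℕ //
    n = ∑ i : Fin n, (i.1 + 1) * r i ∧
      (Finset.univ.filter fun i : Fin n => r i ≠ 0).card = k ∧
        ¬ ∀ i : Fin n, r i ≠ 0 → p ∣ (i.1 + 1)}

open Finset Matrix

section LinearAlgebra

variable {F ι : Type*} [Field F] [Fintype ι]

theorem natCard_dotProduct_eq_zero {c : ι → F} (hc : c ≠ 0) :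
    Nat.card {x : ι → F // c ⬝ᵥ x = 0} = Nat.card F ^ (Fintype.card ι - 1) := by
  classical
  let f : Module.Dual F (ι → F) := dotProductBilin F F c
  have hf : f ≠ 0 := by
    obtain ⟨i, hi⟩ := Function.ne_iff.1 hc
    refine fun h => hi ?_
    simpa [f] using LinearMap.congr_fun h (Pi.single i 1)
  have hrank := Module.Dual.finrank_ker_add_one_of_ne_zero hf
  rw [Module.finrank_fintype_fun_eq_card] at hrank
  change Nat.card (LinearMap.ker f) = _
  rw [Module.natCard_eq_pow_finrank (K := F)]
  congr 1
  omega

def vanishingEquiv (R : Type*) [Zero R] (t : ι → Prop) [DecidablePred t] :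
    {a : ι → R // ∀ i, t i → a i = 0} ≃ ({i // ¬ t i} → R) where
  toFun a j := a.1 j
  invFun b := ⟨fun i => if h : t i then 0 else b ⟨i, h⟩, fun i hi => dif_pos hi⟩
  left_inv a := by
    ext i
    by_cases h : t i
    · simp [h, a.2 i h]
    · simp [h]
  right_inv b := by
    ext j
    simp [j.2]

theorem natCard_vanishing_dotProduct_eq_zero [DecidableEq F] (t : ι → Prop) [DecidablePred t]
    (w : ι → F) :
    Nat.card {a : ι → F // (∀ i, t i → a i = 0) ∧ w ⬝ᵥ a = 0} =
      if ∀ i, ¬ t i → w i = 0 then Nat.card F ^ Fintype.card {i // ¬ t i}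
      else Nat.card F ^ (Fintype.card {i // ¬ t i} - 1) := by
  let w' : {i // ¬ t i} → F := fun j => w j
  have e : {a : ι → F // (∀ i, t i → a i = 0) ∧ w ⬝ᵥ a = 0} ≃ {b // w' ⬝ᵥ b = 0} :=
    (Equiv.subtypeSubtypeEquivSubtypeInter _ _).symm.trans <|
      (vanishingEquiv F t).subtypeEquiv fun a => by
        have hzero : ∑ i : {i // t i}, w i * a.1 i = 0 :=
          Finset.sum_eq_zero fun i _ => by rw [a.2 i i.2, mul_zero]
        rw [dotProduct, ← Fintype.sum_subtype_add_sum_subtype t, hzero, zero_add]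
        rfl
  rw [Nat.card_congr e]
  split_ifs with hw
  · have hw' : w' = 0 := funext fun j => hw j j.2
    simp [hw', Nat.card_fun]
  · refine natCard_dotProduct_eq_zero fun hw' => hw fun i hi => ?_
    exact congrFun hw' ⟨i, hi⟩

end LinearAlgebra

section Grouping

variable {α M : Type*} [Fintype α] [AddCommMonoid M]

theorem sum_ite_eq_sum_card_filter (κ : α → ℕ) (P : α → Prop) [DecidablePred P]
    {s : Finset ℕ} (hκ : ∀ a, κ a ∈ s) (f g : ℕ → M) :
    ∑ a, (if P a then f (κ a) else g (κ a)) =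
      ∑ k ∈ s, (#{a | κ a = k ∧ P a} • f k + #{a | κ a = k ∧ ¬ P a} • g k) := by
  rw [← Finset.sum_fiberwise_of_maps_to (fun a _ => hκ a)]
  refine Finset.sum_congr rfl fun k _ => ?_
  rw [Finset.sum_ite, Finset.filter_filter, Finset.filter_filter]
  congr 1 <;> rw [← Finset.sum_const] <;>
    exact Finset.sum_congr rfl fun a ha => by rw [(Finset.mem_filter.1 ha).2.1]

end Grouping

def rankSolutions (n : ℕ) : Set (Fin n → ℕ) := {r | n = ∑ i : Fin n, (i.1 + 1) * r i}

theorem le_of_mem_rankSolutions {n : ℕ} {r : Fin n → ℕ} (hr : r ∈ rankSolutions n) (i : Fin n) :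
    r i ≤ n :=
  calc r i ≤ (i.1 + 1) * r i := Nat.le_mul_of_pos_left _ i.1.succ_pos
    _ ≤ ∑ j : Fin n, (j.1 + 1) * r j :=
      Finset.single_le_sum (f := fun j : Fin n => (j.1 + 1) * r j) (by simp) (mem_univ i)
    _ = n := hr.symm

theorem finite_rankSolutions (n : ℕ) : (rankSolutions n).Finite :=
  (Set.Finite.pi (t := fun _ => Set.Iic n) fun _ => Set.finite_Iic n).subset
    fun _ hr i _ => le_of_mem_rankSolutions hr i

theorem card_support_mem_Icc {n : ℕ} (hn : 1 ≤ n) {r : Fin n → ℕ} (hr : r ∈ rankSolutions n) :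
    #{i | r i ≠ 0} ∈ Icc 1 n := by
  refine mem_Icc.2 ⟨Finset.card_pos.2 ?_, (card_filter_le _ _).trans_eq (card_fin n)⟩
  by_contra h
  have hzero : ∀ i, r i = 0 := by simpa [Finset.filter_eq_empty_iff] using h
  simp [rankSolutions, hzero] at hr
  omega

section Fibers

variable (p : ℕ) {n : ℕ}

def detFiber (r : Fin n → ℕ) : Set (Fin n → ZMod p) :=
  {a | (∀ i, r i = 0 → a i = 0) ∧ ∑ i : Fin n, (i.1 + 1) • a i = 0}

def equivSigmaDetFiber :
    {z : Fin n → ℕ × ZMod p //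
        n = ∑ i : Fin n, (i.1 + 1) * (z i).1 ∧
          (∀ i : Fin n, (z i).1 = 0 → (z i).2 = 0) ∧
            ∑ i : Fin n, (i.1 + 1) • (z i).2 = 0} ≃
      Σ r : rankSolutions n, detFiber p r.1 where
  toFun z := ⟨⟨fun i => (z.1 i).1, z.2.1⟩, ⟨fun i => (z.1 i).2, z.2.2⟩⟩
  invFun x := ⟨fun i => (x.1.1 i, x.2.1 i), x.1.2, x.2.2⟩
  left_inv _ := rfl
  right_inv _ := rfl

theorem natCard_detFiber [Fact p.Prime] (r : Fin n → ℕ) :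
    Nat.card (detFiber p r) =
      if ∀ i : Fin n, r i ≠ 0 → p ∣ (i.1 + 1) then p ^ #{i | r i ≠ 0}
      else p ^ (#{i | r i ≠ 0} - 1) := by
  have h := natCard_vanishing_dotProduct_eq_zero (fun i => r i = 0)
    (fun i : Fin n => ((i.1 + 1 : ℕ) : ZMod p))
  simp only [ZMod.natCast_eq_zero_iff, Fintype.card_subtype, Nat.card_zmod] at h
  convert h using 3
  simp [detFiber, dotProduct, nsmul_eq_mul]

end Fibers

theorem nuSolP_eq_card_filter (n k p : ℕ) [Fintype (rankSolutions n)] :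
    nuSolP n k p =
      #{r : rankSolutions n | #{i | r.1 i ≠ 0} = k ∧ ∀ i : Fin n, r.1 i ≠ 0 → p ∣ (i.1 + 1)} := by
  rw [← Fintype.card_subtype, ← Nat.card_eq_fintype_card]
  exact Nat.card_congr (Equiv.subtypeSubtypeEquivSubtypeInter _ _).symm

theorem nuSolP'_eq_card_filter (n k p : ℕ) [Fintype (rankSolutions n)] :
    nuSolP' n k p =
      #{r : rankSolutions n | #{i | r.1 i ≠ 0} = k ∧ ¬ ∀ i : Fin n, r.1 i ≠ 0 → p ∣ (i.1 + 1)} := by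
  rw [← Fintype.card_subtype, ← Nat.card_eq_fintype_card]
  exact Nat.card_congr (Equiv.subtypeSubtypeEquivSubtypeInter _ _).symm

/-- Count of tuples `((rᵢ,aᵢ))ᵢ` satisfying the rank equation and the determinant
equation `∑ i·aᵢ = 0` in `ℤ/pℤ`. -/
theorem stmt_11 (p : ℕ) (hp : p.Prime) (n : ℕ) (hn : 1 ≤ n) :
    Nat.card {z : Fin n → ℕ × ZMod p //
        n = ∑ i : Fin n, (i.1 + 1) * (z i).1 ∧
          (∀ i : Fin n, (z i).1 = 0 → (z i).2 = 0) ∧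
            ∑ i : Fin n, (i.1 + 1) • (z i).2 = 0} =
      ∑ k ∈ Finset.Icc 1 n, (nuSolP n k p * p ^ k + nuSolP' n k p * p ^ (k - 1)) := by
  have : Fact p.Prime := ⟨hp⟩
  have : Fintype (rankSolutions n) := (finite_rankSolutions n).fintype
  rw [Nat.card_congr (equivSigmaDetFiber p), Nat.card_sigma]
  simp only [natCard_detFiber]
  rw [sum_ite_eq_sum_card_filter (fun r : rankSolutions n => #{i | r.1 i ≠ 0}) _
    (fun r => card_support_mem_Icc hn r.2) (fun k => p ^ k) (fun k => p ^ (k - 1))]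
  simp only [nuSolP_eq_card_filter, nuSolP'_eq_card_filter, smul_eq_mul]
end

section
/- Let p be a prime, n ≥ 1, and c ∈ ℤ/pℤ with c ≠ 0. The number of n-tuples ((r₁,a₁),...,(rₙ,aₙ)) with rᵢ ∈ ℕ, aᵢ ∈ ℤ/pℤ, aᵢ = 0 whenever rᵢ = 0, satisfying n = r₁ + 2r₂ + ⋯ + n·rₙ and a₁ + 2a₂ + ⋯ + n·aₙ = c in ℤ/pℤ, equals Σ_{k=1}^{n} ν'(n,k,p)·p^{k-1}. -/
open Finset

variable {p n : ℕ} [Fact p.Prime]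

lemma fiber_card_aux (w : Fin n → ZMod p) (T : Finset (Fin n)) (i₀ : Fin n)
    (hi₀ : i₀ ∈ T) (hw : w i₀ ≠ 0) (c : ZMod p) :
    Nat.card {a : Fin n → ZMod p //
      (∀ i, i ∉ T → a i = 0) ∧ ∑ i, w i * a i = c} = p ^ (T.card - 1) := by
  classical
  have key : ∀ a : Fin n → ZMod p, (∀ i, i ∉ T → a i = 0) →
      ∑ i, w i * a i = w i₀ * a i₀ + ∑ j ∈ (T.erase i₀).attach, w j.1 * a j.1 := by
    intro a ha
    rw [Finset.sum_attach (T.erase i₀) (fun j => w j * a j),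
      Finset.add_sum_erase T (fun j => w j * a j) hi₀]
    symm
    apply Finset.sum_subset (Finset.subset_univ T)
    intro i _ hiT
    rw [ha i hiT, mul_zero]
  set A : (↥(T.erase i₀) → ZMod p) → (Fin n → ZMod p) := fun b i =>
    if h : i ∈ T.erase i₀ then b ⟨i, h⟩ else
      if i = i₀ then (w i₀)⁻¹ * (c - ∑ j ∈ (T.erase i₀).attach, w j.1 * b j) else 0
    with hA
  have hA1 : ∀ b i, i ∉ T → A b i = 0 := by
    intro b i hiT
    rw [hA]
    dsimp only
    rw [dif_neg fun h => hiT (Finset.mem_of_mem_erase h),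
      if_neg (fun h => hiT (by rw [h]; exact hi₀))]
  have hA2 : ∀ b (j : ↥(T.erase i₀)), A b j.1 = b j := by
    intro b j
    rw [hA]; dsimp only
    rw [dif_pos j.2]
  have hA3 : ∀ b, A b i₀ =
      (w i₀)⁻¹ * (c - ∑ j ∈ (T.erase i₀).attach, w j.1 * b j) := by
    intro b
    rw [hA]; dsimp only
    rw [dif_neg (fun h => (Finset.ne_of_mem_erase h) rfl), if_pos rfl]
  have hAsum : ∀ b, ∑ i, w i * A b i = c := by
    intro b
    have hs : ∑ j ∈ (T.erase i₀).attach, w j.1 * A b j.1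
        = ∑ j ∈ (T.erase i₀).attach, w j.1 * b j :=
      Finset.sum_congr rfl fun j _ => by rw [hA2 b j]
    rw [key (A b) (hA1 b), hs, hA3 b, mul_inv_cancel_left₀ hw]
    ring
  let E : {a : Fin n → ZMod p //
      (∀ i, i ∉ T → a i = 0) ∧ ∑ i, w i * a i = c} ≃ (↥(T.erase i₀) → ZMod p) :=
  { toFun := fun a j => a.1 j.1
    invFun := fun b => ⟨A b, hA1 b, hAsum b⟩
    left_inv := by
      rintro ⟨a, ha1, ha2⟩
      ext i
      simp only
      by_cases h : i ∈ T.erase i₀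
      · rw [hA]; dsimp only; rw [dif_pos h]
      · by_cases h2 : i = i₀
        · subst h2
          have hk := key a ha1
          rw [ha2] at hk
          have h3 := hA3 (fun j => a j.1)
          rw [h3, inv_mul_eq_iff_eq_mul₀ hw, hk]
          ring
        · rw [hA]; dsimp only
          rw [dif_neg h, if_neg h2, eq_comm]
          apply ha1
          intro hiT
          exact h (Finset.mem_erase.2 ⟨h2, hiT⟩)
    right_inv := by
      intro b
      ext j
      exact hA2 b j }
  rw [Nat.card_congr E, Nat.card_eq_fintype_card, Fintype.card_fun, ZMod.card,
    Fintype.card_coe, Finset.card_erase_of_mem hi₀]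

lemma fiber_card_zero (w : Fin n → ZMod p) (T : Finset (Fin n))
    (hw : ∀ i ∈ T, w i = 0) (c : ZMod p) (hc : c ≠ 0) :
    Nat.card {a : Fin n → ZMod p //
      (∀ i, i ∉ T → a i = 0) ∧ ∑ i, w i * a i = c} = 0 := by
  classical
  have : IsEmpty {a : Fin n → ZMod p //
      (∀ i, i ∉ T → a i = 0) ∧ ∑ i, w i * a i = c} := by
    constructor
    rintro ⟨a, ha1, ha2⟩
    apply hc
    rw [← ha2]
    apply Finset.sum_eq_zero
    intro i _
    by_cases h : i ∈ T
    · rw [hw i h, zero_mul]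
    · rw [ha1 i h, mul_zero]
  simp [Nat.card_of_isEmpty]

lemma fiber_card (r : Fin n → ℕ) (c : ZMod p) (hc : c ≠ 0) :
    Nat.card {a : Fin n → ZMod p //
      (∀ i, r i = 0 → a i = 0) ∧ ∑ i : Fin n, (i.1 + 1) • a i = c} =
    if ∀ i : Fin n, r i ≠ 0 → p ∣ (i.1 + 1) then 0
    else p ^ ((Finset.univ.filter fun i : Fin n => r i ≠ 0).card - 1) := by
  classical
  set w : Fin n → ZMod p := fun i => ((i.1 + 1 : ℕ) : ZMod p) with hwdef
  set T : Finset (Fin n) := Finset.univ.filter fun i : Fin n => r i ≠ 0 with hT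
  have hmem : ∀ i, i ∈ T ↔ r i ≠ 0 := by
    intro i; rw [hT, Finset.mem_filter]; simp
  have hE : {a : Fin n → ZMod p //
      (∀ i, r i = 0 → a i = 0) ∧ ∑ i : Fin n, (i.1 + 1) • a i = c} ≃
      {a : Fin n → ZMod p //
      (∀ i, i ∉ T → a i = 0) ∧ ∑ i, w i * a i = c} := by
    apply Equiv.subtypeEquivRight
    intro a
    have h1 : (∀ i, r i = 0 → a i = 0) ↔ (∀ i, i ∉ T → a i = 0) := by
      constructor
      · intro h i hi
        exact h i (by rcases hmem i with ⟨_, h2⟩; by_contra hri; exact hi (h2 hri))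
      · intro h i hi
        exact h i (fun hiT => (hmem i).1 hiT hi)
    have h2 : ∀ i : Fin n, (i.1 + 1) • a i = w i * a i := by
      intro i
      rw [hwdef]
      push_cast
      rw [nsmul_eq_mul]
      push_cast
      ring
    rw [h1, Finset.sum_congr rfl fun i _ => h2 i]
  rw [Nat.card_congr hE]
  by_cases hall : ∀ i : Fin n, r i ≠ 0 → p ∣ (i.1 + 1)
  · rw [if_pos hall]
    apply fiber_card_zero w T _ c hc
    intro i hiT
    rw [hwdef]
    exact (ZMod.natCast_eq_zero_iff _ p).2 (hall i ((hmem i).1 hiT))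
  · rw [if_neg hall]
    push_neg at hall
    obtain ⟨i₀, hr0, hdvd⟩ := hall
    apply fiber_card_aux w T i₀ ((hmem i₀).2 hr0) _ c
    rw [hwdef, Ne, ZMod.natCast_eq_zero_iff]
    exact hdvd

section main
variable (p n : ℕ)

lemma finite_R : Finite {r : Fin n → ℕ // n = ∑ i : Fin n, (i.1 + 1) * r i} := by
  have hbound : ∀ (r : {r : Fin n → ℕ // n = ∑ i : Fin n, (i.1 + 1) * r i})
      (i : Fin n), r.1 i < n + 1 := by
    intro r i
    have h1 : r.1 i ≤ (i.1 + 1) * r.1 i := Nat.le_mul_of_pos_left _ (Nat.succ_pos _)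
    have h2 : (i.1 + 1) * r.1 i ≤ ∑ j : Fin n, (j.1 + 1) * r.1 j :=
      Finset.single_le_sum (f := fun j : Fin n => (j.1 + 1) * r.1 j)
        (fun j _ => Nat.zero_le _) (Finset.mem_univ i)
    have h3 : ∑ j : Fin n, (j.1 + 1) * r.1 j = n := r.2.symm
    omega
  apply Finite.of_injective
    (fun r : {r : Fin n → ℕ // n = ∑ i : Fin n, (i.1 + 1) * r i} =>
      (fun i => (⟨r.1 i, hbound r i⟩ : Fin (n + 1))))
  intro r s h
  apply Subtype.ext
  funext i
  exact congrArg Fin.val (congrFun h i)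

end main

/-- Count of tuples `((rᵢ,aᵢ))ᵢ` satisfying the rank equation and the determinant
equation `∑ i·aᵢ = c ≠ 0` in `ℤ/pℤ`. -/
theorem stmt_12 (p : ℕ) (hp : p.Prime) (n : ℕ) (hn : 1 ≤ n)
    (c : ZMod p) (hc : c ≠ 0) :
    Nat.card {z : Fin n → ℕ × ZMod p //
        n = ∑ i : Fin n, (i.1 + 1) * (z i).1 ∧
          (∀ i : Fin n, (z i).1 = 0 → (z i).2 = 0) ∧
            ∑ i : Fin n, (i.1 + 1) • (z i).2 = c} =
      ∑ k ∈ Finset.Icc 1 n, nuSolP' n k p * p ^ (k - 1) := by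
  classical
  haveI : Fact p.Prime := ⟨hp⟩
  haveI : Finite {r : Fin n → ℕ // n = ∑ i : Fin n, (i.1 + 1) * r i} := finite_R n
  letI : Fintype {r : Fin n → ℕ // n = ∑ i : Fin n, (i.1 + 1) * r i} := Fintype.ofFinite _
  set R := {r : Fin n → ℕ // n = ∑ i : Fin n, (i.1 + 1) * r i} with hR
  let F : (Fin n → ℕ) → Type := fun r => {a : Fin n → ZMod p //
      (∀ i, r i = 0 → a i = 0) ∧ ∑ i : Fin n, (i.1 + 1) • a i = c}
  letI : ∀ r : R, Fintype (F r.1) := fun r => Fintype.ofFinite _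
  let Φ : {z : Fin n → ℕ × ZMod p //
        n = ∑ i : Fin n, (i.1 + 1) * (z i).1 ∧
          (∀ i : Fin n, (z i).1 = 0 → (z i).2 = 0) ∧
            ∑ i : Fin n, (i.1 + 1) • (z i).2 = c} ≃ (Σ r : R, F r.1) :=
  { toFun := fun z => ⟨⟨fun i => (z.1 i).1, z.2.1⟩, ⟨fun i => (z.1 i).2, z.2.2.1, z.2.2.2⟩⟩
    invFun := fun x => ⟨fun i => (x.1.1 i, x.2.1 i), x.1.2, x.2.2.1, x.2.2.2⟩
    left_inv := fun z => rfl
    right_inv := fun x => rfl }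
  rw [Nat.card_congr Φ, Nat.card_eq_fintype_card, Fintype.card_sigma]
  have hterm : ∀ r : R, Fintype.card (F r.1) =
      if ∀ i : Fin n, r.1 i ≠ 0 → p ∣ (i.1 + 1) then 0
      else p ^ ((Finset.univ.filter fun i : Fin n => r.1 i ≠ 0).card - 1) := by
    intro r
    rw [← Nat.card_eq_fintype_card]
    exact fiber_card r.1 c hc
  rw [Finset.sum_congr rfl fun r _ => hterm r]
  have hstep : ∀ r : R,
      (if ∀ i : Fin n, r.1 i ≠ 0 → p ∣ (i.1 + 1) then 0
        else p ^ ((Finset.univ.filter fun i : Fin n => r.1 i ≠ 0).card - 1)) =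
      ∑ k ∈ Finset.Icc 1 n,
        if ((Finset.univ.filter fun i : Fin n => r.1 i ≠ 0).card = k ∧
            ¬ ∀ i : Fin n, r.1 i ≠ 0 → p ∣ (i.1 + 1)) then p ^ (k - 1) else 0 := by
    intro r
    by_cases hall : ∀ i : Fin n, r.1 i ≠ 0 → p ∣ (i.1 + 1)
    · rw [if_pos hall, eq_comm]
      apply Finset.sum_eq_zero
      intro k _
      rw [if_neg]
      rintro ⟨-, h2⟩
      exact h2 hall
    · rw [if_neg hall]
      have hmem : (Finset.univ.filter fun i : Fin n => r.1 i ≠ 0).card ∈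
          Finset.Icc 1 n := by
        rw [Finset.mem_Icc]
        constructor
        · push_neg at hall
          obtain ⟨i₀, h0, -⟩ := hall
          apply Finset.card_pos.2
          exact ⟨i₀, Finset.mem_filter.2 ⟨Finset.mem_univ _, h0⟩⟩
        · have h1 : (Finset.univ.filter fun i : Fin n => r.1 i ≠ 0).card =
              ∑ i ∈ Finset.univ.filter fun i : Fin n => r.1 i ≠ 0, 1 := by
            rw [Finset.sum_const, smul_eq_mul, mul_one]
          have h2 : ∑ i ∈ Finset.univ.filter (fun i : Fin n => r.1 i ≠ 0), 1 ≤
              ∑ i ∈ Finset.univ.filter (fun i : Fin n => r.1 i ≠ 0),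
                (i.1 + 1) * r.1 i := by
            apply Finset.sum_le_sum
            intro i hi
            have := (Finset.mem_filter.1 hi).2
            have : 1 ≤ r.1 i := Nat.one_le_iff_ne_zero.2 this
            calc 1 ≤ r.1 i := this
              _ ≤ (i.1 + 1) * r.1 i := Nat.le_mul_of_pos_left _ (Nat.succ_pos _)
          have h3 : ∑ i ∈ Finset.univ.filter (fun i : Fin n => r.1 i ≠ 0),
              (i.1 + 1) * r.1 i ≤ ∑ i : Fin n, (i.1 + 1) * r.1 i :=
            Finset.sum_le_sum_of_subset (Finset.filter_subset _ _)
          have h4 : ∑ i : Fin n, (i.1 + 1) * r.1 i = n := r.2.symm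
          omega
      simp only [and_iff_left hall]
      rw [Finset.sum_ite_eq (Finset.Icc 1 n)
        ((Finset.univ.filter fun i : Fin n => r.1 i ≠ 0).card)
        (fun k => p ^ (k - 1)), if_pos hmem]
  rw [Finset.sum_congr rfl fun r _ => hstep r, Finset.sum_comm]
  apply Finset.sum_congr rfl
  intro k hk
  rw [Finset.sum_ite, Finset.sum_const_zero, add_zero, Finset.sum_const, smul_eq_mul]
  congr 1
  have hEq : nuSolP' n k p = Fintype.card {r : R //
      (Finset.univ.filter fun i : Fin n => r.1 i ≠ 0).card = k ∧
        ¬ ∀ i : Fin n, r.1 i ≠ 0 → p ∣ (i.1 + 1)} := by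
    rw [nuSolP', ← Nat.card_eq_fintype_card]
    apply Nat.card_congr
    exact (Equiv.subtypeSubtypeEquivSubtypeInter
      (fun r : Fin n → ℕ => n = ∑ i : Fin n, (i.1 + 1) * r i)
      (fun r : Fin n → ℕ => (Finset.univ.filter fun i : Fin n => r i ≠ 0).card = k ∧
        ¬ ∀ i : Fin n, r i ≠ 0 → p ∣ (i.1 + 1))).symm
  rw [hEq, Fintype.card_subtype]
end
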